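/- arXiv:2312.11675 — 3 statements merged into one kernel-verified Lean document; each statement's English description precedes it below -/
import Mathlib

section
/- Monotonicity of regression under strengthening: if partial assignments p and q satisfy that q extends p (every variable defined in p is defined in q with the same value), and both R(p,a,o) and R(q,a,o) are defined (p and q both consistent with outcome o), then R(q,a,o) extends R(p,a,o). -/
def Consistent {V D : Type} (p1 p2 : V → Option D) : Prop :=
  ∀ v, p1 v = none ∨ p2 v = none ∨ p1 v = p2 v

/-- Partial assignment `q` extends partial assignment `p`: every variable
defined in `p` is defined in `q` with the same value. -/
def PExtends {V D : Type} (q p : V → Option D) : Prop :=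
  ∀ v x, p v = some x → q v = some x

def regr {V D : Type} [DecidableEq D] (p pre o : V → Option D) : V → Option D :=
  fun v =>
    match pre v with
    | some x => some x
    | none => if p v = o v then none else p v

section

variable {V D : Type}

theorem regr_eq_some_iff [DecidableEq D] {p pre o : V → Option D} {v : V} {x : D} :
    regr p pre o v = some x ↔
      pre v = some x ∨ (pre v = none ∧ p v ≠ o v ∧ p v = some x) := by
  unfold regr
  cases pre v with
  | some y => simp
  | none => by_cases h : p v = o v <;> simp [h]

theorem Consistent.right_eq_none_of_ne {p o : V → Option D} (h : Consistent p o) {v : V} {x : D}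
    (hp : p v = some x) (hne : p v ≠ o v) : o v = none :=
  ((h v).resolve_left (by simp [hp])).resolve_right hne

end

theorem regression_monotone_general {V D : Type} [DecidableEq D]
    (p q pre o : V → Option D)
    (hqp : PExtends q p)
    (hpo : Consistent p o) :
    PExtends (regr q pre o) (regr p pre o) := by
  intro v x h
  rw [regr_eq_some_iff] at h ⊢
  rcases h with hpre | ⟨hpre, hne, hpv⟩
  · exact Or.inl hpre
  · have hqv : q v = some x := hqp v x hpv
    have hov : o v = none := hpo.right_eq_none_of_ne hpv hne
    exact Or.inr ⟨hpre, by simp [hqv, hov], hqv⟩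

theorem regression_monotone {V D : Type} [Fintype V] [DecidableEq D]
    (p q pre o : V → Option D)
    (hqp : PExtends q p)
    (hpo : Consistent p o) (hqo : Consistent q o) :
    PExtends (regr q pre o) (regr p pre o) :=
  regression_monotone_general p q pre o hqp hpo
end

section
/- A strong plan reaches the goal along every execution: if π is a closed partial policy over a finite state space such that the directed graph of π-transitions (edges from s to each outcome of π(s), for non-goal s in the domain of π) is acyclic and every π-reachable non-goal state is in the domain of π, then every maximal execution sequence from the initial state under π is finite and terminates in a goal state. -/
/-- One π-transition: the policy prescribes action `a` in `s` and `s'` is one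
of its possible outcomes. -/
def PStep {S A : Type} (succ : S → A → Set S) (π : S → Option A) (s s' : S) : Prop :=
  ∃ a, π s = some a ∧ s' ∈ succ s a

/-- States reachable from `s0` under policy `π`. -/
def Reach {S A : Type} (succ : S → A → Set S) (π : S → Option A) (s0 s : S) : Prop :=
  Relation.ReflTransGen (PStep succ π) s0 s

/-- `π` is closed: every reachable non-goal state is assigned an applicable action. -/
def Closed {S A : Type} (succ : S → A → Set S) (exec : S → A → Prop)
    (G : Set S) (π : S → Option A) (s0 : S) : Prop :=
  ∀ s, Reach succ π s0 s → s ∉ G → ∃ a, π s = some a ∧ exec s a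

/-- `π` is a strong cyclic plan from `s0`: it is closed and from every
reachable state some π-execution reaches the goal. -/
def StrongCyclic {S A : Type} (succ : S → A → Set S) (exec : S → A → Prop)
    (G : Set S) (π : S → Option A) (s0 : S) : Prop :=
  Closed succ exec G π s0 ∧
    ∀ s, Reach succ π s0 s → ∃ g ∈ G, Relation.ReflTransGen (PStep succ π) s g

theorem not_forall_rel_apply_succ_of_acyclic {α : Type*} [Finite α] {r : α → α → Prop}
    (hacyc : ∀ a, ¬ Relation.TransGen r a a) (f : ℕ → α) : ¬ ∀ i, r (f i) (f (i + 1)) := by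
  have : IsTrans α (flip (Relation.TransGen r)) :=
    ⟨fun _ _ _ hab hbc => Relation.TransGen.trans hbc hab⟩
  have : Std.Irrefl (flip (Relation.TransGen r)) := ⟨hacyc⟩
  intro hf
  exact (wellFounded_iff_isEmpty_descending_chain.1
    (Finite.wellFounded_of_trans_of_irrefl (flip (Relation.TransGen r)))).false
    ⟨f, fun i => Relation.TransGen.single (hf i)⟩

theorem reflTransGen_of_forall_rel_apply_succ {α : Type*} {r : α → α → Prop} {f : ℕ → α}
    {n : ℕ} (h : ∀ i < n, r (f i) (f (i + 1))) : Relation.ReflTransGen r (f 0) (f n) :=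
  (reflTransGen_of_succ_of_le (fun i j => r (f i) (f j)) (fun i hi => h i hi.2)
    n.zero_le).lift f fun _ _ => id

theorem strong_plan_terminates_in_goal_general {S A : Type} [Fintype S]
    (succ : S → A → Set S) (G : Set S) (π : S → Option A) (s0 : S)
    (hacyc : ∀ s, ¬ Relation.TransGen (PStep succ π) s s)
    (hdom : ∀ s, Reach succ π s0 s → s ∉ G → (π s).isSome) :
    (∀ f : ℕ → S, f 0 = s0 → ¬ (∀ i, PStep succ π (f i) (f (i + 1)))) ∧
    (∀ (f : ℕ → S) (n : ℕ), f 0 = s0 →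
      (∀ i < n, PStep succ π (f i) (f (i + 1))) →
      (∀ i < n, f i ∉ G) →
      (f n ∈ G ∨ π (f n) = none) →
      f n ∈ G) := by
  refine ⟨fun f _ => not_forall_rel_apply_succ_of_acyclic hacyc f, ?_⟩
  intro f n hf0 hstep _ hlast
  refine hlast.elim id fun hnone => by_contra fun hG => ?_
  have hreach : Reach succ π s0 (f n) := hf0 ▸ reflTransGen_of_forall_rel_apply_succ hstep
  simpa [hnone] using hdom (f n) hreach hG

theorem strong_plan_terminates_in_goal {S A : Type} [Fintype S]
    (succ : S → A → Set S) (G : Set S) (π : S → Option A) (s0 : S)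
    (hacyc : ∀ s, ¬ Relation.TransGen (PStep succ π) s s)
    (hne : ∀ s a, π s = some a → (succ s a).Nonempty)
    (hdom : ∀ s, Reach succ π s0 s → s ∉ G → (π s).isSome) :
    (∀ f : ℕ → S, f 0 = s0 → ¬ (∀ i, PStep succ π (f i) (f (i + 1)))) ∧
    (∀ (f : ℕ → S) (n : ℕ), f 0 = s0 →
      (∀ i < n, PStep succ π (f i) (f (i + 1))) →
      (∀ i < n, f i ∉ G) →
      (f n ∈ G ∨ π (f n) = none) →
      f n ∈ G) :=
  strong_plan_terminates_in_goal_general succ G π s0 hacyc hdom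
end

section
/- FSAP correctness propagates backwards: let D ⊆ S be a set of deadend states (no strong cyclic plan exists from any state in D, for a fixed finite FOND transition system). If state s has an action a such that some outcome of a applied in s lies in D, and forbidding all such (state, action) pairs leaves no applicable action in s, then s itself is a deadend (no strong cyclic plan exists from s). -/
/-- `s` is a deadend: no strong cyclic plan rooted at `s` exists. -/
def Deadend {S A : Type} (succ : S → A → Set S) (exec : S → A → Prop)
    (G : Set S) (s : S) : Prop :=
  ¬ ∃ π : S → Option A, StrongCyclic succ exec G π s

theorem StrongCyclic.of_reach {S A : Type} {succ : S → A → Set S} {exec : S → A → Prop}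
    {G : Set S} {π : S → Option A} {s0 t : S} (h : StrongCyclic succ exec G π s0)
    (ht : Reach succ π s0 t) : StrongCyclic succ exec G π t :=
  ⟨fun u hu => h.1 u (ht.trans hu), fun u hu => h.2 u (ht.trans hu)⟩

theorem fsap_propagates_deadend_general {S A : Type}
    (succ : S → A → Set S) (exec : S → A → Prop) (G : Set S)
    (D : Set S) (hD : ∀ d ∈ D, Deadend succ exec G d)
    (s : S) (hsG : s ∉ G)
    (hforbid : ∀ a, exec s a → ∃ s' ∈ succ s a, s' ∈ D) :
    Deadend succ exec G s := by
  rintro ⟨π, hπ⟩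
  obtain ⟨a, hπa, hexec⟩ := hπ.1 s .refl hsG
  obtain ⟨s', hs', hs'D⟩ := hforbid a hexec
  exact hD s' hs'D ⟨π, hπ.of_reach (.single ⟨a, hπa, hs'⟩)⟩

theorem fsap_propagates_deadend {S A : Type} [Fintype S]
    (succ : S → A → Set S) (exec : S → A → Prop) (G : Set S)
    (hne : ∀ s a, exec s a → (succ s a).Nonempty)
    (D : Set S) (hD : ∀ d ∈ D, Deadend succ exec G d)
    (s : S) (hsG : s ∉ G)
    (hforbid : ∀ a, exec s a → ∃ s' ∈ succ s a, s' ∈ D) :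
    Deadend succ exec G s :=
  fsap_propagates_deadend_general succ exec G D hD s hsG hforbid
end
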